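/- Let σ > 0, k > 0 and define for μ ≥ 0 the function R̄(μ) = (μ + k)·(1/2 − (μ̄/(2k))·(1 − 2Φ(−μ/σ))). There exists a constant C_k > 0 (the maximum over μ ≥ 0 of 2(μ+k)φ(μ/σ)/σ) such that for all 0 < μ̄ < min(k/(1 + C_k), σ√(π/2)), R̄ is strictly increasing on [0, ∞), and R̄(0) = k/2. -/

import Mathlib

/-- The standard normal cumulative distribution function. -/
noncomputable def Phi (x : ℝ) : ℝ :=
  ∫ t in Set.Iic x, ProbabilityTheory.gaussianPDFReal 0 1 t

open MeasureTheory ProbabilityTheory Filter Topology Set Asymptotics Real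

/-! With `a = μ̄/(2k)` and `g(μ) = 2(μ+k)φ(μ/σ)/σ`, the derivative of `R̄` is
`1/2 − a(1 − 2Φ(−μ/σ)) − a g(μ) ≥ 1/2 − a(1 + C_k)`, using `Φ ≥ 0` and `g ≤ C_k`; this is positive
as soon as `μ̄ < k/(1 + C_k)`. The maximum `C_k` exists because `g` is continuous, positive at `0`
and tends to `0` at infinity by Gaussian decay. -/

@[fun_prop]
lemma continuous_gaussianPDFReal (m : ℝ) (v : NNReal) : Continuous (gaussianPDFReal m v) := by
  rw [gaussianPDFReal_def]
  fun_prop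

lemma gaussianPDFReal_zero_neg (v : NNReal) (x : ℝ) :
    gaussianPDFReal 0 v (-x) = gaussianPDFReal 0 v x := by
  simp [gaussianPDFReal]

lemma tendsto_add_mul_gaussianPDFReal_div_atTop {σ : ℝ} (hσ : 0 < σ) (k : ℝ) :
    Tendsto (fun μ => (μ + k) * gaussianPDFReal 0 1 (μ / σ)) atTop (𝓝 0) := by
  have hdecay : (fun μ : ℝ => rexp (-(2 * σ ^ 2)⁻¹ * μ ^ 2 + 0 * μ)) =o[atTop] (· ^ (-1 : ℝ)) :=
    rexp_neg_quadratic_isLittleO_rpow_atTop (by simp; positivity) 0 (-1)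
  have hlin : (fun μ : ℝ => μ + k) =O[atTop] id :=
    (isBigO_refl _ _).add (isLittleO_const_id_atTop k).isBigO
  have hprod : (fun μ => (μ + k) * rexp (-(2 * σ ^ 2)⁻¹ * μ ^ 2 + 0 * μ)) =o[atTop]
      (fun _ => (1 : ℝ)) := by
    refine (hlin.mul_isLittleO hdecay).congr' .rfl ?_
    filter_upwards [eventually_gt_atTop 0] with μ hμ
    simp [Real.rpow_neg_one, hμ.ne']
  have := ((isLittleO_one_iff ℝ).1 hprod).const_mul (√(2 * π))⁻¹
  rw [mul_zero] at this
  refine this.congr fun μ => ?_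
  simp only [gaussianPDFReal, NNReal.coe_one, mul_one, sub_zero]
  rw [show -(2 * σ ^ 2)⁻¹ * μ ^ 2 + 0 * μ = -(μ / σ) ^ 2 / 2 by field_simp; ring]
  ring

lemma hasDerivAt_Phi (x : ℝ) : HasDerivAt Phi (gaussianPDFReal 0 1 x) x := by
  have hint : Integrable (gaussianPDFReal 0 1) := integrable_gaussianPDFReal 0 1
  have hPhi : Phi = fun y => (∫ t in (0 : ℝ)..y, gaussianPDFReal 0 1 t) + Phi 0 := by
    ext y
    rw [Phi, Phi, ← intervalIntegral.integral_Iic_sub_Iic hint.integrableOn hint.integrableOn,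
      sub_add_cancel]
  rw [hPhi]
  exact (intervalIntegral.integral_hasDerivAt_right hint.intervalIntegrable
    ((continuous_gaussianPDFReal 0 1).stronglyMeasurableAtFilter _ _)
    (continuous_gaussianPDFReal 0 1).continuousAt).add_const _

lemma Phi_nonneg (x : ℝ) : 0 ≤ Phi x :=
  setIntegral_nonneg measurableSet_Iic fun t _ => gaussianPDFReal_nonneg 0 1 t

lemma Phi_zero : Phi 0 = 1 / 2 := by
  have hint : Integrable (gaussianPDFReal 0 1) := integrable_gaussianPDFReal 0 1
  have htotal : Phi 0 + ∫ t in Ioi (0 : ℝ), gaussianPDFReal 0 1 t = 1 := by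
    rw [Phi, intervalIntegral.integral_Iic_add_Ioi hint.integrableOn hint.integrableOn]
    exact integral_gaussianPDFReal_eq_one 0 one_ne_zero
  have hsymm : ∫ t in Ioi (0 : ℝ), gaussianPDFReal 0 1 t = Phi 0 := by
    rw [Phi]
    simpa only [gaussianPDFReal_zero_neg, neg_zero] using
      integral_comp_neg_Ioi 0 (gaussianPDFReal 0 1)
  linarith

theorem exists_isGreatest_image_Ici_of_tendsto {f : ℝ → ℝ} {a l : ℝ}
    (hf : ContinuousOn f (Ici a)) (hlim : Tendsto f atTop (𝓝 l)) (hl : l < f a) :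
    ∃ c, IsGreatest (f '' Ici a) c := by
  obtain ⟨x, hx, hmax⟩ := hf.exists_isMaxOn' isClosed_Ici self_mem_Ici (x₀ := a) <| by
    rw [cocompact_eq_atBot_atTop, inf_sup_right, (disjoint_atBot_principal_Ici a).eq_bot,
      bot_sup_eq]
    exact ((hlim.eventually (gt_mem_nhds hl)).mono fun _ h => h.le).filter_mono inf_le_left
  exact ⟨f x, mem_image_of_mem f hx, forall_mem_image.2 hmax⟩

noncomputable def profiledRegret (σ k μbar μ : ℝ) : ℝ :=
  (μ + k) * (1 / 2 - (μbar / (2 * k)) * (1 - 2 * Phi (-μ / σ)))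

lemma profiledRegret_zero (σ k μbar : ℝ) : profiledRegret σ k μbar 0 = k / 2 := by
  norm_num [profiledRegret, Phi_zero]
  ring

lemma hasDerivAt_profiledRegret (σ k μbar μ : ℝ) :
    HasDerivAt (profiledRegret σ k μbar)
      (1 / 2 - μbar / (2 * k) * (1 - 2 * Phi (-μ / σ))
        - μbar / (2 * k) * (2 * (μ + k) * gaussianPDFReal 0 1 (μ / σ) / σ)) μ := by
  have hscale : HasDerivAt (fun x : ℝ => -x / σ) (-1 / σ) μ := (hasDerivAt_neg μ).div_const σ
  have hPhi := (hasDerivAt_Phi (-μ / σ)).comp μ hscale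
  have hprod := ((hasDerivAt_id μ).add_const k).mul
    ((((hPhi.const_mul 2).const_sub 1).const_mul (μbar / (2 * k))).const_sub (1 / 2))
  refine hprod.congr_deriv ?_
  simp only [id, Function.comp_apply, neg_div, gaussianPDFReal_zero_neg]
  ring

theorem strictMonoOn_profiledRegret {σ k μbar C : ℝ} (hk : 0 < k) (hμbar : 0 ≤ μbar)
    (hC : μbar * (1 + C) < k)
    (hbound : ∀ μ ∈ Ici 0, 2 * (μ + k) * gaussianPDFReal 0 1 (μ / σ) / σ ≤ C) :
    StrictMonoOn (profiledRegret σ k μbar) (Ici 0) := by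
  have hderiv (μ : ℝ) := hasDerivAt_profiledRegret σ k μbar μ
  refine strictMonoOn_of_deriv_pos (convex_Ici 0)
    (fun μ _ => (hderiv μ).continuousAt.continuousWithinAt) fun μ hμ => ?_
  rw [interior_Ici] at hμ
  set a := μbar / (2 * k)
  have ha : 0 ≤ a := by positivity
  have haC : a * (1 + C) < 1 / 2 := by
    rw [div_mul_eq_mul_div, div_lt_iff₀ (by positivity)]
    linarith
  have hslope := mul_le_mul_of_nonneg_left (hbound μ (Ioi_subset_Ici_self hμ)) ha
  have hPhi := mul_nonneg ha (Phi_nonneg (-μ / σ))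
  rw [(hderiv μ).deriv]
  linarith

/-- there is a constant `C_k > 0`, the maximum over `μ ≥ 0` of
`2(μ+k)φ(μ/σ)/σ`, such that for all `0 < μ̄ < min(k/(1+C_k), σ√(π/2))` the profiled regret
`R̄(μ) = (μ+k)(1/2 − (μ̄/(2k))(1 − 2Φ(−μ/σ)))` is strictly increasing on `[0, ∞)` with
`R̄(0) = k/2`. -/
theorem per_profiled_regret_increasing (σ k : ℝ) (hσ : 0 < σ) (hk : 0 < k)
    (R : ℝ → ℝ → ℝ)
    (hR : ∀ μbar μ, R μbar μ
      = (μ + k) * (1 / 2 - (μbar / (2 * k)) * (1 - 2 * Phi (-μ / σ)))) :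
    ∃ Ck : ℝ, 0 < Ck ∧
      IsGreatest ((fun μ => 2 * (μ + k) * ProbabilityTheory.gaussianPDFReal 0 1 (μ / σ) / σ)
        '' Set.Ici 0) Ck ∧
      ∀ μbar : ℝ, 0 < μbar →
        μbar < min (k / (1 + Ck)) (σ * Real.sqrt (Real.pi / 2)) →
        StrictMonoOn (R μbar) (Set.Ici 0) ∧ R μbar 0 = k / 2 := by
  set g : ℝ → ℝ := fun μ => 2 * (μ + k) * gaussianPDFReal 0 1 (μ / σ) / σ
  have hg0 : 0 < g 0 := by
    have := gaussianPDFReal_pos 0 1 (0 / σ) one_ne_zero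
    positivity
  have hglim : Tendsto g atTop (𝓝 0) := by
    simpa [g, mul_assoc, mul_div_right_comm] using
      (tendsto_add_mul_gaussianPDFReal_div_atTop hσ k).const_mul (2 / σ)
  obtain ⟨Ck, hCk⟩ :=
    exists_isGreatest_image_Ici_of_tendsto (by fun_prop : Continuous g).continuousOn hglim hg0
  have hCk_pos : 0 < Ck := hg0.trans_le (hCk.2 (mem_image_of_mem g self_mem_Ici))
  have hR_eq (μbar : ℝ) : R μbar = profiledRegret σ k μbar := funext (hR μbar)
  refine ⟨Ck, hCk_pos, hCk, fun μbar hμbar hlt => ?_⟩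
  rw [hR_eq]
  refine ⟨strictMonoOn_profiledRegret hk hμbar.le ?_ fun μ hμ => hCk.2 (mem_image_of_mem g hμ),
    profiledRegret_zero σ k μbar⟩
  exact (lt_div_iff₀ (by linarith)).1 (hlt.trans_le (min_le_left _ _))
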